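/- arXiv:2310.01289 — 3 statements merged into one kernel-verified Lean document; each statement's English description precedes it below -/
import Mathlib

section
/- Let κ be a separably closed field of characteristic p > 0 that is not perfect (i.e., the Frobenius map x ↦ xᵖ is not surjective on κ). Then the quotient group κˣ/(κˣ)ᵖ of the multiplicative group of κ by the subgroup of p-th powers is infinite. (In the paper this is the observation showing that Lemma 2.4 fails over separably closed but imperfect fields: for f = [p] : 𝔾ₘ → 𝔾ₘ the cokernel of f(κ) is κˣ/κˣᵖ, which is infinite.) -/
/-- Let `κ` be a separably closed field of characteristic `p > 0` that is not perfect
(the Frobenius `x ↦ x ^ p` is not surjective).  Then the quotient group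
`κˣ ⧸ (κˣ)ᵖ` of the multiplicative group of `κ` by the subgroup of `p`-th powers
is infinite. -/
theorem stmt_1 (κ : Type*) [Field κ] (p : ℕ) [Fact p.Prime] [CharP κ p]
    [IsSepClosed κ] (himperfect : ∃ c : κ, ¬ ∃ x : κ, x ^ p = c) :
    Infinite (κˣ ⧸ (powMonoidHom p : κˣ →* κˣ).range) := by
  obtain ⟨c, hc⟩ := himperfect
  -- κ is infinite: otherwise the injective Frobenius would be surjective
  haveI : Infinite κ := by
    by_contra h
    rw [not_infinite_iff_finite] at h
    have hinj : Function.Injective (frobenius κ p) := frobenius_inj κ p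
    have hsurj := Finite.injective_iff_surjective.mp hinj
    obtain ⟨x, hx⟩ := hsurj c
    exact hc ⟨x, by rwa [frobenius_def] at hx⟩
  have hne : ∀ a : κ, c + a ^ p ≠ 0 := by
    intro a h
    refine hc ⟨-a, ?_⟩
    have hp0 : p ≠ 0 := (Fact.out (p := p.Prime)).ne_zero
    have h2 : (-a) ^ p = (0 - a) ^ p := by ring
    rw [h2, sub_pow_char, zero_pow hp0, zero_sub]
    linear_combination -h
  let F : κ → κˣ ⧸ (powMonoidHom p : κˣ →* κˣ).range :=
    fun a => QuotientGroup.mk (Units.mk0 (c + a ^ p) (hne a))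
  have hF : Function.Injective F := by
    intro a b hab
    obtain ⟨v, hv⟩ := QuotientGroup.eq.mp hab
    have hv' : Units.mk0 (c + a ^ p) (hne a) * v ^ p = Units.mk0 (c + b ^ p) (hne b) := by
      rw [show (v : κˣ) ^ p = powMonoidHom p v from rfl, hv, mul_inv_cancel_left]
    have hkey : (c + a ^ p) * (v : κ) ^ p = c + b ^ p := by
      have := congrArg Units.val hv'
      simpa using this
    set u : κ := (v : κ) with hu
    by_cases h1 : u = 1
    · rw [h1, one_pow, mul_one] at hkey
      have hab' : a ^ p = b ^ p := add_left_cancel hkey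
      have : (a - b) ^ p = 0 := by rw [sub_pow_char, hab', sub_self]
      have := pow_eq_zero_iff (Nat.Prime.ne_zero Fact.out) |>.mp this
      linear_combination this
    · exact absurd ⟨(b - a * u) / (u - 1), by
        have hu1 : u - 1 ≠ 0 := sub_ne_zero.mpr h1
        rw [div_pow, div_eq_iff (pow_ne_zero _ hu1), sub_pow_char, sub_pow_char, mul_pow]
        linear_combination -hkey⟩ hc
  exact Infinite.of_injective F hF
end

section
/- Let O_K be a complete discrete valuation ring of equal characteristic 2 whose residue field κ is separably closed and imperfect, let K = Frac(O_K), let π be a uniformizer of O_K, and let c ∈ O_K be an element whose image in κ is not a square in κ. Fix an algebraic closure Ω of K, and let α₁, α₂ ∈ Ω be roots of f₁(X) = X² + πX + c and f₂(X) = X² + π²X + c respectively. Set β := πα₁ + α₂ ∈ Ω. Then the minimal polynomial of β over K is g(X) = X² + π²X + (π²c + c); in particular g(β) = 0 and g is irreducible over K. -/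
open Polynomial

/-- Let `O_K` be a complete discrete valuation ring of equal characteristic 2 whose
residue field `κ` is separably closed and imperfect, `K = Frac(O_K)`, `π` a uniformizer,
and `c ∈ O_K` with image in `κ` not a square.  Fix an algebraic closure `Ω` of `K`, and
let `α₁, α₂ ∈ Ω` be roots of `f₁(X) = X² + πX + c` and `f₂(X) = X² + π²X + c`
respectively.  Set `β := πα₁ + α₂`.  Then the minimal polynomial of `β` over `K` is
`g(X) = X² + π²X + (π²c + c)`; in particular `g(β) = 0` and `g` is irreducible over `K`. -/
theorem stmt_3 (O : Type*) [CommRing O] [IsDomain O] [IsDiscreteValuationRing O]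
    [CharP O 2] [IsAdicComplete (IsLocalRing.maximalIdeal O) O]
    [IsSepClosed (IsLocalRing.ResidueField O)]
    (π : O) (hπ : Irreducible π)
    (c : O) (hc : ¬ ∃ x : IsLocalRing.ResidueField O, x ^ 2 = IsLocalRing.residue O c)
    (Ω : Type*) [Field Ω] [Algebra O Ω] [Algebra (FractionRing O) Ω]
    [IsScalarTower O (FractionRing O) Ω] [IsAlgClosure (FractionRing O) Ω]
    (α₁ α₂ : Ω)
    (h₁ : Polynomial.aeval α₁ (X ^ 2 + C (π ^ 1) * X + C c : O[X]) = 0)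
    (h₂ : Polynomial.aeval α₂ (X ^ 2 + C (π ^ 2) * X + C c : O[X]) = 0) :
    minpoly (FractionRing O) (algebraMap O Ω π * α₁ + α₂) =
        X ^ 2 + C (algebraMap O (FractionRing O) (π ^ 2)) * X
          + C (algebraMap O (FractionRing O) (π ^ 2 * c + c)) ∧
      Polynomial.aeval (algebraMap O Ω π * α₁ + α₂)
        (X ^ 2 + C (algebraMap O (FractionRing O) (π ^ 2)) * X
          + C (algebraMap O (FractionRing O) (π ^ 2 * c + c)) : (FractionRing O)[X]) = 0 ∧
      Irreducible (X ^ 2 + C (algebraMap O (FractionRing O) (π ^ 2)) * X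
          + C (algebraMap O (FractionRing O) (π ^ 2 * c + c)) : (FractionRing O)[X]) := by
  set K := FractionRing O
  have hinj : Function.Injective (algebraMap O K) := IsFractionRing.injective O K
  haveI : CharP K 2 := charP_of_injective_algebraMap hinj 2
  haveI : CharP Ω 2 := charP_of_injective_algebraMap (algebraMap K Ω).injective 2
  set g : K[X] := X ^ 2 + C (algebraMap O K (π ^ 2)) * X
          + C (algebraMap O K (π ^ 2 * c + c)) with hg
  -- aeval β g = 0
  simp only [map_add, map_mul, map_pow, aeval_X, aeval_C, pow_one] at h₁ h₂
  have h2Ω : (2 : Ω) = 0 := CharTwo.two_eq_zero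
  have heval : Polynomial.aeval (algebraMap O Ω π * α₁ + α₂) g = 0 := by
    have hcomm : ∀ x : O, algebraMap K Ω (algebraMap O K x) = algebraMap O Ω x := fun x =>
      (IsScalarTower.algebraMap_apply O K Ω x).symm
    simp only [hg, map_add, map_mul, map_pow, aeval_X, aeval_C, hcomm, map_mul, map_add, map_pow]
    linear_combination (algebraMap O Ω π)^2 * h₁ + h₂ +
      (algebraMap O Ω π * α₁ * α₂) * h2Ω
  -- monic, degree
  have hmon : g.Monic := by
    unfold g; monicity!
  have hdeg : g.natDegree = 2 := by
    unfold g; compute_degree!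
  -- no roots in K
  have hnoroot : ∀ t : K, ¬ g.IsRoot t := by
    intro t ht
    have ht' : t ^ 2 + algebraMap O K (π ^ 2) * t + algebraMap O K (π ^ 2 * c + c) = 0 := by
      simpa [hg, IsRoot, eval_add, eval_mul, eval_pow] using ht
    -- t is integral over O
    have hint : IsIntegral O t := by
      refine ⟨X ^ 2 + C (π ^ 2) * X + C (π ^ 2 * c + c), ?_, ?_⟩
      · monicity!
      · simpa [eval₂_add, eval₂_mul, eval₂_pow] using ht'
    obtain ⟨y, rfl⟩ := IsIntegrallyClosed.isIntegral_iff.mp hint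
    have hy : y ^ 2 + π ^ 2 * y + (π ^ 2 * c + c) = 0 := by
      apply hinj
      simp only [map_add, map_mul, map_pow, map_zero] at ht' ⊢
      linear_combination ht'
    apply hc
    refine ⟨IsLocalRing.residue O y, ?_⟩
    have hπ0 : IsLocalRing.residue O π = 0 := by
      rw [IsLocalRing.residue_eq_zero_iff]
      exact hπ.not_isUnit
    have := congrArg (IsLocalRing.residue O) hy
    simp only [map_add, map_mul, map_pow, hπ0, map_zero] at this
    have h2κ : (2 : IsLocalRing.ResidueField O) = 0 := by
      have h := congrArg (IsLocalRing.residue O) (CharTwo.two_eq_zero (R := O))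
      simp only [map_ofNat, map_zero] at h
      exact h
    linear_combination this - (IsLocalRing.residue O c) * h2κ
  have hirr : Irreducible g := by
    rw [irreducible_iff_roots_eq_zero_of_degree_le_three (by omega) (by omega),
      Multiset.eq_zero_iff_forall_notMem]
    intro a ha
    exact hnoroot a ((mem_roots hmon.ne_zero).mp ha)
  exact ⟨(minpoly.eq_of_irreducible_of_monic hirr heval hmon).symm, heval, hirr⟩
end

section
/- Let O_K be a complete discrete valuation ring of equal characteristic 2 whose residue field κ is separably closed and imperfect, let K = Frac(O_K), let π be a uniformizer of O_K, and let c ∈ O_K be an element whose image in κ is not a square in κ. Fix an algebraic closure Ω of K and roots α₁, α₂ ∈ Ω of f₁(X) = X² + πX + c and f₂(X) = X² + π²X + c respectively, and set L := K(α₁, α₂). Then the integral closure O_L of O_K in L equals O_K[α₁, α₂], i.e., the integral closure of O_K in L coincides with the O_K-subalgebra of L generated by α₁ and α₂. -/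
open Polynomial

set_option maxHeartbeats 2000000 in
set_option synthInstance.maxHeartbeats 400000 in
/-- With `O_K`, `K`, `π`, `c`, `Ω`, `α₁`, `α₂` as before, set `L := K(α₁, α₂)`.
Then the integral closure `O_L` of `O_K` in `L` equals `O_K[α₁, α₂]`, i.e. the
elements of `L` integral over `O_K` form exactly the `O_K`-subalgebra generated
by `α₁` and `α₂`. -/
theorem stmt_5 (O : Type*) [CommRing O] [IsDomain O] [IsDiscreteValuationRing O]
    [CharP O 2] [IsAdicComplete (IsLocalRing.maximalIdeal O) O]
    [IsSepClosed (IsLocalRing.ResidueField O)]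
    (π : O) (hπ : Irreducible π)
    (c : O) (hc : ¬ ∃ x : IsLocalRing.ResidueField O, x ^ 2 = IsLocalRing.residue O c)
    (Ω : Type*) [Field Ω] [Algebra O Ω] [Algebra (FractionRing O) Ω]
    [IsScalarTower O (FractionRing O) Ω] [IsAlgClosure (FractionRing O) Ω]
    (α₁ α₂ : Ω)
    (h₁ : Polynomial.aeval α₁ (X ^ 2 + C (π ^ 1) * X + C c : O[X]) = 0)
    (h₂ : Polynomial.aeval α₂ (X ^ 2 + C (π ^ 2) * X + C c : O[X]) = 0) :
    integralClosure O Ω ⊓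
        Subalgebra.restrictScalars O
          (IntermediateField.adjoin (FractionRing O) {α₁, α₂}).toSubalgebra =
      Algebra.adjoin O {α₁, α₂} := by
  classical
  set K := FractionRing O with hK
  have hinjK : Function.Injective (algebraMap K Ω) := (algebraMap K Ω).injective
  have hinjOK : Function.Injective (algebraMap O K) := IsFractionRing.injective O K
  have hinj : Function.Injective (algebraMap O Ω) := by
    rw [IsScalarTower.algebraMap_eq O K Ω]
    exact hinjK.comp hinjOK
  haveI hΩ2 : CharP Ω 2 := charP_of_injective_ringHom hinj 2
  have h2 : (2 : Ω) = 0 := CharTwo.two_eq_zero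
  set φ := algebraMap O Ω with hφ
  set P := φ π with hP
  set Cc := φ c with hCc
  -- the basic equations
  have e₁ : α₁ ^ 2 = P * α₁ + Cc := by
    have h := h₁
    simp only [map_add, map_mul, map_pow, aeval_X, aeval_C, pow_one] at h
    linear_combination h - (P * α₁ + Cc) * h2
  have e₂ : α₂ ^ 2 = P ^ 2 * α₂ + Cc := by
    have h := h₂
    simp only [map_add, map_mul, map_pow, aeval_X, aeval_C] at h
    linear_combination h - (P ^ 2 * α₂ + Cc) * h2
  -- units in O
  have hπ0 : π ≠ 0 := hπ.ne_zero
  have hcu : IsUnit c := by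
    by_contra h
    exact hc ⟨0, by
      rw [zero_pow (by norm_num)]
      exact (Ideal.Quotient.eq_zero_iff_mem.mpr ((IsLocalRing.mem_maximalIdeal c).mpr h)).symm⟩
  obtain ⟨d, hdc⟩ : ∃ d : O, d * c = 1 := ⟨↑hcu.unit⁻¹, hcu.val_inv_mul⟩
  have hπ2nu : ¬ IsUnit (π ^ 2) := by
    intro h
    exact hπ.not_isUnit (isUnit_of_mul_isUnit_left (by rwa [← sq]))
  have hvunit : IsUnit (1 + π ^ 2) := by
    have : (1 : O) + π ^ 2 = 1 - π ^ 2 := by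
      rw [sub_eq_add_neg, CharTwo.neg_eq]
    rw [this]
    exact IsLocalRing.isUnit_one_sub_self_of_mem_nonunits _ hπ2nu
  obtain ⟨v, hv⟩ : ∃ v : O, v * (1 + π ^ 2) = 1 := ⟨↑hvunit.unit⁻¹, hvunit.val_inv_mul⟩
  -- derived elements
  obtain ⟨β, hβ⟩ : ∃ t : Ω, t = α₁ + α₂ := ⟨_, rfl⟩
  obtain ⟨γ, hγ⟩ : ∃ t : Ω, t = α₁ * β := ⟨_, rfl⟩
  obtain ⟨u, hu⟩ : ∃ t : Ω, t = α₁ + P * α₂ := ⟨_, rfl⟩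
  obtain ⟨uinv, huinv⟩ : ∃ t : Ω, t = (u + P ^ 3) * φ v * ((α₁ + P) * φ d) ^ 2 := ⟨_, rfl⟩
  have eα₂ : α₂ = α₁ + β := by linear_combination -hβ - α₁ * h2
  have hdc' : φ d * Cc = 1 := by rw [hCc, hφ, ← map_mul, hdc, map_one]
  have hv' : φ v * (1 + P ^ 2) = 1 := by
    rw [hP, hφ]
    rw [show (1 : Ω) + algebraMap O Ω π ^ 2 = algebraMap O Ω (1 + π ^ 2) by
      rw [map_add, map_one, map_pow]]
    rw [← map_mul, hv, map_one]
  have ehβ2 : β ^ 2 = (P + P ^ 2) * α₁ + P ^ 2 * β := by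
    linear_combination (β + α₁ + α₂ - P ^ 2) * hβ + e₁ + e₂ +
      (-(P ^ 2 * α₁) + α₁ * α₂ + Cc) * h2
  have hβsq : β ^ 2 = P * u := by
    linear_combination ehβ2 - P * hu - P ^ 2 * eα₂
  have hα₁inv : α₁ * ((α₁ + P) * φ d) = 1 := by
    linear_combination φ d * e₁ + hdc' + φ d * P * α₁ * h2
  have huu : u * (u + P ^ 3) = (1 + P ^ 2) * α₁ ^ 2 := by
    linear_combination (u + α₁ + P * α₂ + P ^ 3) * hu + P ^ 2 * e₂ - P ^ 2 * e₁ +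
      (P * α₁ * α₂ + P ^ 4 * α₂) * h2
  have huv : u * uinv = 1 := by
    linear_combination u * huinv + φ v * ((α₁ + P) * φ d) ^ 2 * huu +
      φ v * (1 + P ^ 2) * (α₁ * ((α₁ + P) * φ d) + 1) * hα₁inv + hv'
  -- nonvanishing
  have hc'0 : Cc ≠ 0 := fun h => hcu.ne_zero (hinj (by rw [← hCc, h, map_zero]))
  have hP0 : P ≠ 0 := fun h => hπ0 (hinj (by rw [← hP, h, map_zero]))
  have hα₁0 : α₁ ≠ 0 := by
    intro h
    apply hc'0
    rw [h] at e₁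
    simpa using e₁.symm
  have hβ0 : β ≠ 0 := by
    intro h
    have hα : α₂ = α₁ := by rw [eα₂, h, add_zero]
    rw [hα] at e₂
    have hPP : P * α₁ = P ^ 2 * α₁ := by linear_combination e₂ - e₁
    have hz : P * α₁ * (1 - P) = 0 := by linear_combination hPP
    rcases mul_eq_zero.mp hz with h' | h'
    · rcases mul_eq_zero.mp h' with h'' | h''
      · exact hP0 h''
      · exact hα₁0 h''
    · have hP1 : P = 1 := by linear_combination -h'
      have : π = 1 := hinj (by rw [map_one, ← hP]; exact hP1)
      exact hπ.not_isUnit (this ▸ isUnit_one)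
  -- the subalgebra A and the module span
  set A := Algebra.adjoin O {α₁, α₂} with hA
  have memA₁ : α₁ ∈ A := Algebra.subset_adjoin (Set.mem_insert _ _)
  have memA₂ : α₂ ∈ A := Algebra.subset_adjoin (Set.mem_insert_of_mem _ rfl)
  have memAβ : β ∈ A := by rw [hβ]; exact add_mem memA₁ memA₂
  have memAγ : γ ∈ A := by rw [hγ]; exact mul_mem memA₁ memAβ
  have memAu : u ∈ A := by
    rw [hu]; exact add_mem memA₁ (mul_mem (A.algebraMap_mem π) memA₂)
  have memAuinv : uinv ∈ A := by
    rw [huinv]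
    exact mul_mem (mul_mem (add_mem memAu (pow_mem (A.algebraMap_mem π) 3))
      (A.algebraMap_mem v))
      (pow_mem (mul_mem (add_mem memA₁ (A.algebraMap_mem π)) (A.algebraMap_mem d)) 2)
  -- the O-module span of 1, α₁, β, γ
  set M : Submodule O Ω := Submodule.span O {1, α₁, β, γ} with hM
  have memM_of : ∀ a b e f : O, φ a + φ b * α₁ + φ e * β + φ f * γ ∈ M := by
    intro a b e f
    refine add_mem (add_mem (add_mem ?_ ?_) ?_) ?_
    · rw [show φ a = a • (1 : Ω) by rw [Algebra.smul_def, mul_one]]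
      exact M.smul_mem a (Submodule.subset_span (by simp))
    · rw [← Algebra.smul_def]
      exact M.smul_mem b (Submodule.subset_span (by simp))
    · rw [← Algebra.smul_def]
      exact M.smul_mem e (Submodule.subset_span (by simp))
    · rw [← Algebra.smul_def]
      exact M.smul_mem f (Submodule.subset_span (by simp))
  have hgen : ∀ x ∈ ({1, α₁, β, γ} : Set Ω), x ∈ M := fun x hx => Submodule.subset_span hx
  have hmulgen : ∀ x ∈ ({1, α₁, β, γ} : Set Ω), ∀ y ∈ ({1, α₁, β, γ} : Set Ω),
      x * y ∈ M := by
    have t22 : α₁ * α₁ = φ c + φ π * α₁ + φ 0 * β + φ 0 * γ := by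
      simp only [map_zero, zero_mul, add_zero]
      linear_combination e₁
    have t23 : α₁ * β = φ 0 + φ 0 * α₁ + φ 0 * β + φ 1 * γ := by
      simp only [map_zero, map_one, zero_mul, one_mul, add_zero, zero_add]
      linear_combination -hγ
    have t24 : α₁ * γ = φ 0 + φ 0 * α₁ + φ c * β + φ π * γ := by
      simp only [map_zero, zero_mul, add_zero, zero_add]
      linear_combination (α₁ - P) * hγ + β * e₁
    have t33 : β * β = φ 0 + φ (π + π ^ 2) * α₁ + φ (π ^ 2) * β + φ 0 * γ := by
      simp only [map_zero, map_add, map_pow, zero_mul, add_zero, zero_add]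
      linear_combination ehβ2
    have t34 : β * γ = φ (c * (π + π ^ 2)) + φ (π ^ 2 + π ^ 3) * α₁ +
        φ 0 * β + φ (π ^ 2) * γ := by
      simp only [map_zero, map_add, map_mul, map_pow, zero_mul, add_zero]
      linear_combination (β - P ^ 2) * hγ + α₁ * ehβ2 + (P + P ^ 2) * e₁
    have t44 : γ * γ = φ (c * (π ^ 2 + π ^ 3)) +
        φ (π ^ 3 + π ^ 4 + c * π + c * π ^ 2) * α₁ + φ (c * π ^ 2) * β +
        φ (π ^ 3) * γ := by
      simp only [map_add, map_mul, map_pow]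
      linear_combination (γ + α₁ * β - P ^ 3) * hγ + α₁ ^ 2 * ehβ2 +
        ((P + P ^ 2) * α₁ + P ^ 2 + P ^ 3 + P ^ 2 * β) * e₁
    intro x hx y hy
    simp only [Set.mem_insert_iff, Set.mem_singleton_iff] at hx hy
    rcases hx with rfl | rfl | rfl | rfl <;> rcases hy with rfl | rfl | rfl | rfl
    all_goals first
      | (rw [one_mul]; exact hgen _ (by simp))
      | (rw [mul_one]; exact hgen _ (by simp))
      | (rw [t22]; exact memM_of _ _ _ _)
      | (rw [t23]; exact memM_of _ _ _ _)
      | (rw [t24]; exact memM_of _ _ _ _)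
      | (rw [t33]; exact memM_of _ _ _ _)
      | (rw [t34]; exact memM_of _ _ _ _)
      | (rw [t44]; exact memM_of _ _ _ _)
      | (rw [mul_comm, t23]; exact memM_of _ _ _ _)
      | (rw [mul_comm, t24]; exact memM_of _ _ _ _)
      | (rw [mul_comm, t34]; exact memM_of _ _ _ _)
  have hmulM : ∀ x ∈ M, ∀ y ∈ M, x * y ∈ M := by
    have step : ∀ x ∈ ({1, α₁, β, γ} : Set Ω), ∀ y ∈ M, x * y ∈ M := by
      intro x hx y hy
      induction hy using Submodule.span_induction with
      | mem z hz => exact hmulgen x hx z hz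
      | zero => simpa using M.zero_mem
      | add a b ha hb iha ihb => simpa [mul_add] using add_mem iha ihb
      | smul r a ha ih => rw [mul_smul_comm]; exact M.smul_mem r ih
    intro x hx y hy
    induction hx using Submodule.span_induction with
    | mem z hz => exact step z hz y hy
    | zero => simpa using M.zero_mem
    | add a b ha hb iha ihb => simpa [add_mul] using add_mem iha ihb
    | smul r a ha ih => rw [smul_mul_assoc]; exact M.smul_mem r ih
  have hAM : ∀ x ∈ A, x ∈ M := by
    intro x hx
    induction hx using Algebra.adjoin_induction with
    | mem z hz =>
      rcases hz with rfl | hz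
      · exact hgen _ (by simp)
      · rw [Set.mem_singleton_iff] at hz
        subst hz
        rw [eα₂]
        exact add_mem (hgen _ (by simp)) (hgen _ (by simp))
    | algebraMap r =>
      rw [Algebra.algebraMap_eq_smul_one]
      exact M.smul_mem r (hgen _ (by simp))
    | add a b ha hb iha ihb => exact add_mem iha ihb
    | mul a b ha hb iha ihb => exact hmulM a iha b ihb
  have hrep : ∀ x ∈ A, ∃ a b e f : O, x = φ a + φ b * α₁ + φ e * β + φ f * γ := by
    intro x hx
    have hxM := hAM x hx
    rw [hM, show ({1, α₁, β, γ} : Set Ω) = insert 1 (insert α₁ (insert β {γ})) from rfl]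
      at hxM
    rw [Submodule.mem_span_insert] at hxM
    obtain ⟨a, z₁, hz₁, rfl⟩ := hxM
    rw [Submodule.mem_span_insert] at hz₁
    obtain ⟨b, z₂, hz₂, rfl⟩ := hz₁
    rw [Submodule.mem_span_insert] at hz₂
    obtain ⟨e, z₃, hz₃, rfl⟩ := hz₂
    rw [Submodule.mem_span_singleton] at hz₃
    obtain ⟨f, rfl⟩ := hz₃
    exact ⟨a, b, e, f, by simp only [Algebra.smul_def]; ring⟩
  -- integrality of the generators
  have hmon : ∀ r : O, (X ^ 2 + C r * X + C c : O[X]).Monic := by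
    intro r
    have hdeg : (C r * X + C c : O[X]).degree < 2 := by
      apply lt_of_le_of_lt (degree_add_le _ _)
      rw [max_lt_iff]
      constructor
      · apply lt_of_le_of_lt (degree_mul_le _ _)
        apply lt_of_le_of_lt (add_le_add degree_C_le degree_X_le)
        norm_num
      · exact lt_of_le_of_lt degree_C_le (by norm_num)
    have : (X ^ 2 + C r * X + C c : O[X]) = X ^ 2 + (C r * X + C c) := by ring
    rw [this]
    exact monic_X_pow_add hdeg
  have hint₁ : IsIntegral O α₁ := ⟨_, hmon (π ^ 1), by rw [← aeval_def]; exact h₁⟩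
  have hint₂ : IsIntegral O α₂ := ⟨_, hmon (π ^ 2), by rw [← aeval_def]; exact h₂⟩
  have hAle : A ≤ integralClosure O Ω := by
    rw [hA]
    apply Algebra.adjoin_le
    rintro x (rfl | rfl)
    · exact hint₁
    · exact hint₂
  have hAint : ∀ x : Ω, x ∈ A → IsIntegral O x := fun x hx => hAle hx
  haveI : Algebra.IsIntegral O A :=
    ⟨fun x => (isIntegral_algHom_iff A.val Subtype.val_injective).mp (hAint _ x.2)⟩
  -- Noetherian
  have hfg : A.FG := ⟨{α₁, α₂}, by rw [hA]; congr 1; simp⟩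
  haveI : Algebra.FiniteType O A := (Subalgebra.fg_iff_finiteType A).mp hfg
  haveI : IsNoetherianRing A := Algebra.FiniteType.isNoetherianRing O A
  -- elements of A
  set a1 : A := ⟨α₁, memA₁⟩ with ha1
  set bA : A := ⟨β, memAβ⟩ with hbA
  set uA : A := ⟨u, memAu⟩ with huA
  set uvA : A := ⟨uinv, memAuinv⟩ with huvA
  set Aβ : Ideal A := Ideal.span {bA} with hAβ
  have hβuA : bA * bA = algebraMap O A π * uA := by
    apply Subtype.ext
    push_cast
    rw [← hφ, ← hP]
    linear_combination hβsq
  have hπmem : algebraMap O A π ∈ Aβ := by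
    refine Ideal.mem_span_singleton'.mpr ⟨bA * uvA, Subtype.ext ?_⟩
    push_cast
    rw [← hφ, ← hP]
    linear_combination uinv * hβsq + P * huv
  -- the ideal Aβ is proper
  have hAβne : Aβ ≠ ⊤ := by
    intro htop
    obtain ⟨t, ht⟩ : ∃ t : A, t * bA = 1 :=
      Ideal.mem_span_singleton'.mp (by rw [← hAβ, htop]; exact Submodule.mem_top)
    have hπw : algebraMap O A π * (uA * t * t) = 1 := by
      linear_combination (-(t * t)) * hβuA + (t * bA + 1) * ht
    have hw : P * ((uA * t * t : A) : Ω) = 1 := by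
      have := congrArg Subtype.val hπw
      push_cast at this
      rw [← hφ, ← hP] at this
      exact this
    have hwint : IsIntegral O ((uA * t * t : A) : Ω) := hAint _ (uA * t * t).2
    have hπK0 : algebraMap O K π ≠ 0 := fun h => hπ0 (hinjOK (by rw [h, map_zero]))
    have hkmap : algebraMap K Ω (algebraMap O K π)⁻¹ = ((uA * t * t : A) : Ω) := by
      rw [map_inv₀, ← IsScalarTower.algebraMap_apply O K Ω, ← hφ, ← hP]
      exact inv_eq_of_mul_eq_one_right hw
    have hkint : IsIntegral O ((algebraMap O K π)⁻¹) := by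
      refine (isIntegral_algHom_iff (IsScalarTower.toAlgHom O K Ω) hinjK).mp ?_
      exact hkmap ▸ hwint
    obtain ⟨y, hy⟩ := IsIntegrallyClosed.isIntegral_iff.mp hkint
    have hyπ : y * π = 1 := hinjOK (by
      rw [map_mul, hy, map_one, inv_mul_cancel₀ hπK0])
    exact hπ.not_isUnit (IsUnit.of_mul_eq_one y (by rw [mul_comm]; exact hyπ))
  haveI : Nontrivial (A ⧸ Aβ) := Ideal.Quotient.nontrivial_iff.mpr hAβne
  set gA : A := ⟨γ, memAγ⟩ with hgA
  have hgA1 : gA = a1 * bA := Subtype.ext (by push_cast; exact hγ)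
  set ρ := IsLocalRing.residue O with hρ
  have hπρ : ρ π = 0 :=
    Ideal.Quotient.eq_zero_iff_mem.mpr ((IsLocalRing.mem_maximalIdeal π).mpr hπ.not_isUnit)
  have hκ2 : (2 : IsLocalRing.ResidueField O) = 0 := by
    rw [show ((2 : IsLocalRing.ResidueField O)) = ρ (2 : O) from (map_ofNat ρ 2).symm,
      show ((2 : O)) = 0 from CharTwo.two_eq_zero, map_zero]
  -- the quotient A ⧸ (β) is a field
  have hfield : IsField (A ⧸ Aβ) := by
    refine ⟨⟨0, 1, zero_ne_one⟩, mul_comm, ?_⟩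
    intro q hq
    obtain ⟨x, rfl⟩ := Ideal.Quotient.mk_surjective q
    obtain ⟨a, b, e, f, hxrep⟩ := hrep ↑x x.2
    by_cases hN : IsUnit (a * a + a * b * π + b * b * c)
    · obtain ⟨n, hn⟩ : ∃ n : O, n * (a * a + a * b * π + b * b * c) = 1 :=
        ⟨↑hN.unit⁻¹, hN.val_inv_mul⟩
      set vA : A := algebraMap O A a + algebraMap O A b * a1 with hvA
      set wA : A := (vA + algebraMap O A (b * π)) * algebraMap O A n with hwA
      have hn' : φ n * (φ a * φ a + φ a * φ b * P + φ b * φ b * Cc) = 1 := by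
        have := congrArg φ hn
        simp only [map_mul, map_add, map_one] at this
        rw [hP, hCc]
        exact this
      have hvw : vA * wA = 1 := by
        apply Subtype.ext
        rw [hwA, hvA]
        push_cast
        rw [← hφ, ← hP]
        linear_combination (φ n * φ b * φ b) * e₁ + hn' +
          (φ n * φ a * φ b * α₁ + φ n * φ b * φ b * P * α₁) * h2
      have hxv : x = vA + (algebraMap O A e * bA + algebraMap O A f * gA) := by
        apply Subtype.ext
        rw [hvA, hgA]
        push_cast
        rw [← hφ]
        linear_combination hxrep
      have hmk : Ideal.Quotient.mk Aβ x = Ideal.Quotient.mk Aβ vA := by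
        rw [Ideal.Quotient.eq, hxv]
        have hmem : algebraMap O A e * bA + algebraMap O A f * gA ∈ Aβ := by
          refine Ideal.add_mem _ (Ideal.mem_span_singleton'.mpr ⟨algebraMap O A e, rfl⟩) ?_
          exact Ideal.mem_span_singleton'.mpr
            ⟨algebraMap O A f * a1, by rw [hgA1]; ring⟩
        simpa using hmem
      exact ⟨Ideal.Quotient.mk Aβ wA, by rw [hmk, ← map_mul, hvw, map_one]⟩
    · exfalso
      have hNm : a * a + a * b * π + b * b * c ∈ IsLocalRing.maximalIdeal O :=
        (IsLocalRing.mem_maximalIdeal _).mpr hN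
      have hNρ : ρ a * ρ a + ρ b * ρ b * ρ c = 0 := by
        have hN0 : ρ (a * a + a * b * π + b * b * c) = 0 :=
          Ideal.Quotient.eq_zero_iff_mem.mpr hNm
        simpa [map_add, map_mul, hπρ] using hN0
      have hbm : b ∈ IsLocalRing.maximalIdeal O := by
        by_contra hb
        have hbne : ρ b ≠ 0 := fun h0 => hb (Ideal.Quotient.eq_zero_iff_mem.mp h0)
        refine hc ⟨ρ a * (ρ b)⁻¹, ?_⟩
        field_simp
        linear_combination -hNρ + (ρ a * ρ a) * hκ2
      have ham : a ∈ IsLocalRing.maximalIdeal O := by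
        have hb0 : ρ b = 0 := Ideal.Quotient.eq_zero_iff_mem.mpr hbm
        rw [hb0] at hNρ
        have : ρ a * ρ a = 0 := by linear_combination hNρ
        exact Ideal.Quotient.eq_zero_iff_mem.mp (mul_self_eq_zero.mp this)
      have hmπ : IsLocalRing.maximalIdeal O = Ideal.span {π} :=
        (IsDiscreteValuationRing.irreducible_iff_uniformizer π).mp hπ
      obtain ⟨a₀, ha₀⟩ : ∃ t, t * π = a := Ideal.mem_span_singleton'.mp (hmπ ▸ ham)
      obtain ⟨b₀, hb₀⟩ : ∃ t, t * π = b := Ideal.mem_span_singleton'.mp (hmπ ▸ hbm)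
      have ha₀' : φ a₀ * P = φ a := by
        rw [hP, hφ, ← map_mul]; exact congrArg _ ha₀
      have hb₀' : φ b₀ * P = φ b := by
        rw [hP, hφ, ← map_mul]; exact congrArg _ hb₀
      have hxmem : x ∈ Aβ := by
        have hx2 : x = algebraMap O A π * (algebraMap O A a₀ + algebraMap O A b₀ * a1)
            + (algebraMap O A e + algebraMap O A f * a1) * bA := by
          apply Subtype.ext
          push_cast
          rw [← hφ, ← hP]
          linear_combination hxrep + φ f * hγ - ha₀' - α₁ * hb₀'
        rw [hx2]
        exact Ideal.add_mem _ (Ideal.mul_mem_right _ _ hπmem)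
          (Ideal.mul_mem_left _ _ (Ideal.subset_span rfl))
      exact hq (Ideal.Quotient.eq_zero_iff_mem.mpr hxmem)
  -- A is local with principal maximal ideal Aβ
  have hmax : Aβ.IsMaximal := Ideal.Quotient.maximal_of_isField _ hfield
  haveI hloc : IsLocalRing A := by
    refine IsLocalRing.of_unique_max_ideal ⟨Aβ, hmax, fun I hI => ?_⟩
    haveI : I.IsMaximal := hI
    have hIc := Ideal.isMaximal_comap_of_isIntegral_of_isMaximal (R := O) I
    have hcomap : I.comap (algebraMap O A) = IsLocalRing.maximalIdeal O :=
      IsLocalRing.eq_maximalIdeal hIc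
    have hπI : algebraMap O A π ∈ I := by
      have : π ∈ I.comap (algebraMap O A) :=
        hcomap ▸ (IsLocalRing.mem_maximalIdeal π).mpr hπ.not_isUnit
      exact this
    have hbI : bA ∈ I := by
      refine hI.isPrime.mem_of_pow_mem 2 ?_
      rw [pow_two, hβuA]
      exact Ideal.mul_mem_right _ _ hπI
    have hle : Aβ ≤ I := by
      rw [hAβ]
      exact Ideal.span_le.mpr (Set.singleton_subset_iff.mpr hbI)
    exact (hmax.eq_of_le hI.ne_top hle).symm
  have hmaxeq : IsLocalRing.maximalIdeal A = Aβ := (IsLocalRing.eq_maximalIdeal hmax).symm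
  have hnf : ¬IsField A := by
    intro hf
    have hbot : IsLocalRing.maximalIdeal A = ⊥ :=
      (IsLocalRing.isField_iff_maximalIdeal_eq).mp hf
    have hm : bA ∈ IsLocalRing.maximalIdeal A := hmaxeq ▸ Ideal.subset_span rfl
    rw [hbot] at hm
    exact hβ0 (congrArg Subtype.val ((Submodule.mem_bot _).mp hm))
  have hprin : (IsLocalRing.maximalIdeal A).IsPrincipal := ⟨⟨bA, by rw [hmaxeq]⟩⟩
  haveI : IsDiscreteValuationRing A :=
    ((IsDiscreteValuationRing.TFAE A hnf).out 0 4).mpr hprin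
  haveI : IsIntegrallyClosed A := inferInstance
  -- final assembly
  apply le_antisymm
  · intro x hx
    rw [Algebra.mem_inf] at hx
    obtain ⟨hxint, hxL⟩ := hx
    have hxint' : IsIntegral O x := hxint
    rw [Subalgebra.mem_restrictScalars, IntermediateField.mem_toSubalgebra] at hxL
    have halg : ∀ z ∈ ({α₁, α₂} : Set Ω), IsAlgebraic K z := by
      rintro z (rfl | rfl)
      · exact (hint₁.tower_top (A := K)).isAlgebraic
      · exact (hint₂.tower_top (A := K)).isAlgebraic
    have hxadj : x ∈ Algebra.adjoin K ({α₁, α₂} : Set Ω) := by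
      rw [← IntermediateField.adjoin_toSubalgebra_of_isAlgebraic halg]
      exact hxL
    -- clear denominators
    have hclear : ∀ z ∈ Algebra.adjoin K ({α₁, α₂} : Set Ω),
        ∃ s : O, s ≠ 0 ∧ algebraMap O Ω s * z ∈ A := by
      intro z hz
      induction hz using Algebra.adjoin_induction with
      | mem w hw =>
        refine ⟨1, one_ne_zero, ?_⟩
        rw [map_one, one_mul]
        rcases hw with rfl | hw
        · exact memA₁
        · rw [Set.mem_singleton_iff] at hw
          subst hw
          exact memA₂
      | algebraMap r =>
        obtain ⟨⟨p, q⟩, hpq⟩ := IsLocalization.mk'_surjective (nonZeroDivisors O) r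
        refine ⟨q, nonZeroDivisors.ne_zero q.2, ?_⟩
        have : algebraMap O Ω q * algebraMap K Ω r = algebraMap O Ω p := by
          rw [IsScalarTower.algebraMap_apply O K Ω, ← map_mul, ← hpq,
            mul_comm, IsLocalization.mk'_spec, IsScalarTower.algebraMap_apply O K Ω]
        rw [this]
        exact A.algebraMap_mem p
      | add y z hy hz ihy ihz =>
        obtain ⟨s, hs, hsy⟩ := ihy
        obtain ⟨t, ht, htz⟩ := ihz
        refine ⟨s * t, mul_ne_zero hs ht, ?_⟩
        rw [map_mul]
        have heq : algebraMap O Ω s * algebraMap O Ω t * (y + z)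
            = algebraMap O Ω t * (algebraMap O Ω s * y)
              + algebraMap O Ω s * (algebraMap O Ω t * z) := by ring
        rw [heq]
        exact add_mem (mul_mem (A.algebraMap_mem t) hsy)
          (mul_mem (A.algebraMap_mem s) htz)
      | mul y z hy hz ihy ihz =>
        obtain ⟨s, hs, hsy⟩ := ihy
        obtain ⟨t, ht, htz⟩ := ihz
        refine ⟨s * t, mul_ne_zero hs ht, ?_⟩
        rw [map_mul]
        have heq : algebraMap O Ω s * algebraMap O Ω t * (y * z)
            = (algebraMap O Ω s * y) * (algebraMap O Ω t * z) := by ring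
        rw [heq]
        exact mul_mem hsy htz
    obtain ⟨s, hs0, hsx⟩ := hclear x hxadj
    haveI : IsScalarTower O A Ω := IsScalarTower.of_algebraMap_eq fun r => rfl
    have hxintA : IsIntegral A x := hxint'.tower_top
    have hginj : Function.Injective (Algebra.ofId A Ω) := fun p q hpq =>
      Subtype.val_injective hpq
    set L' := IsFractionRing.liftAlgHom (R := A) (A := A) (K := FractionRing A)
      (g := Algebra.ofId A Ω) hginj with hL'
    have hLinj : Function.Injective L' := L'.toRingHom.injective
    have hsΩ : algebraMap O Ω s ≠ 0 := fun h0 => hs0 (hinj (by rw [h0, map_zero]))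
    have sA_nzd : (⟨algebraMap O Ω s, A.algebraMap_mem s⟩ : A) ∈ nonZeroDivisors A :=
      mem_nonZeroDivisors_of_ne_zero (fun h0 => hsΩ (by
        simpa using congrArg Subtype.val h0))
    set yA : A := ⟨algebraMap O Ω s * x, hsx⟩ with hyA
    set z : FractionRing A := IsLocalization.mk' (FractionRing A) yA ⟨_, sA_nzd⟩ with hz
    have hLz : L' z = x := by
      rw [hz, IsFractionRing.liftAlgHom_apply, IsFractionRing.lift_mk' hginj]
      show (yA : Ω) / ((⟨algebraMap O Ω s, A.algebraMap_mem s⟩ : A) : Ω) = x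
      rw [hyA]
      exact mul_div_cancel_left₀ x hsΩ
    have hzint : IsIntegral A z :=
      (isIntegral_algHom_iff L' hLinj).mp (by rw [hLz]; exact hxintA)
    obtain ⟨x₀, hx₀⟩ := IsIntegrallyClosed.isIntegral_iff.mp hzint
    have hfin : (x₀ : Ω) = x := by
      have h1 := congrArg L' hx₀
      rw [hLz] at h1
      have h2 : L' (algebraMap A (FractionRing A) x₀) = (x₀ : Ω) := L'.commutes x₀
      rw [h2] at h1
      exact h1
    exact hfin ▸ x₀.2
  · refine le_inf (Algebra.adjoin_le ?_) (Algebra.adjoin_le ?_)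
    · rintro z (rfl | rfl)
      · exact hint₁
      · exact hint₂
    · rintro z (rfl | rfl)
      · rw [SetLike.mem_coe, Subalgebra.mem_restrictScalars, IntermediateField.mem_toSubalgebra]
        exact IntermediateField.subset_adjoin K _ (Set.mem_insert _ _)
      · rw [SetLike.mem_coe, Subalgebra.mem_restrictScalars, IntermediateField.mem_toSubalgebra]
        exact IntermediateField.subset_adjoin K _ (Set.mem_insert_of_mem _ rfl)
end
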